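/- The formula t • A := Ad_{U⁻¹ t U}(A), for t ∈ T(k) and A a Hermitian n×n matrix with A^{(k)} having distinct eigenvalues, defines a group action of T(k) on such matrices: (t₁ t₂) • A = t₁ • (t₂ • A) and 1 • A = A. Moreover this action preserves the eigenvalues of every principal submatrix A^{(j)} for all j ≥ k. -/

import Mathlib

/-!
Reindexing `Fin n ≃ Fin k ⊕ Fin (n - k)` turns `embedBlock k` into `M ↦ fromBlocks M 0 0 1`,
which is multiplicative, unital and commutes with `ᴴ`; hence
`s ↦ embedBlock k (Uᴴ (diagonal s) U)` is a homomorphism and the action axioms follow.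
For `j ≥ k` the embedding factors through the `j × j` block, so the principal `j`-submatrix
of `t • A` is a unitary conjugate of `A^{(j)}` and has the same characteristic polynomial.
-/

open Matrix

/-- The `j`-th principal (upper-left `j × j`) submatrix of an `n × n` matrix. -/
def principalSubmatrix {n : ℕ} (j : ℕ) (hj : j ≤ n) (A : Matrix (Fin n) (Fin n) ℂ) :
    Matrix (Fin j) (Fin j) ℂ :=
  A.submatrix (Fin.castLE hj) (Fin.castLE hj)

/-- The embedding of a `k × k` matrix into `n × n` matrices as the upper-left block,
extended by the identity (the embedding `U(k) ⊂ U(n)`). -/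
def embedBlock {n : ℕ} (k : ℕ) (hk : k ≤ n) (M : Matrix (Fin k) (Fin k) ℂ) :
    Matrix (Fin n) (Fin n) ℂ := fun i j =>
  if hi : (i : ℕ) < k then
    if hj : (j : ℕ) < k then M ⟨i, hi⟩ ⟨j, hj⟩ else 0
  else if i = j then 1 else 0

/-- The Gelfand-Zeitlin action `t • A = Ad_{U⁻¹ t U}(A)` of a diagonal torus element
(given by its diagonal entries `s`) on Hermitian `n × n` matrices, where `U ∈ U(k)`
diagonalizes `A^{(k)}`. -/
noncomputable def gzAct {n : ℕ} (k : ℕ) (hk : k ≤ n) (U : Matrix (Fin k) (Fin k) ℂ) (s : Fin k → ℂ)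
    (A : Matrix (Fin n) (Fin n) ℂ) : Matrix (Fin n) (Fin n) ℂ :=
  embedBlock k hk (Uᴴ * Matrix.diagonal s * U) * A *
    (embedBlock k hk (Uᴴ * Matrix.diagonal s * U))ᴴ

section BlockEmbedding

variable {n k : ℕ} (hk : k ≤ n)

def blockEquiv : Fin k ⊕ Fin (n - k) ≃ Fin n :=
  finSumFinEquiv.trans (finCongr (Nat.add_sub_cancel' hk))

lemma principalSubmatrix_eq_toBlocks₁₁ (B : Matrix (Fin n) (Fin n) ℂ) :
    principalSubmatrix k hk B = (B.submatrix (blockEquiv hk) (blockEquiv hk)).toBlocks₁₁ :=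
  rfl

lemma embedBlock_eq_submatrix_fromBlocks (M : Matrix (Fin k) (Fin k) ℂ) :
    embedBlock k hk M =
      (fromBlocks M 0 0 1).submatrix (blockEquiv hk).symm (blockEquiv hk).symm := by
  ext i j
  obtain ⟨a, rfl⟩ := (blockEquiv hk).surjective i
  obtain ⟨b, rfl⟩ := (blockEquiv hk).surjective j
  rcases a with a | a <;> rcases b with b | b <;>
    (simp [embedBlock, blockEquiv, one_apply, Fin.ext_iff]; try omega)

lemma embedBlock_mul (M N : Matrix (Fin k) (Fin k) ℂ) :
    embedBlock k hk (M * N) = embedBlock k hk M * embedBlock k hk N := by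
  rw [embedBlock_eq_submatrix_fromBlocks, embedBlock_eq_submatrix_fromBlocks,
    embedBlock_eq_submatrix_fromBlocks, submatrix_mul_equiv, fromBlocks_multiply]
  simp only [Matrix.mul_zero, add_zero, Matrix.mul_one, Matrix.zero_mul, zero_add]

lemma embedBlock_one : embedBlock k hk (1 : Matrix (Fin k) (Fin k) ℂ) = 1 := by
  rw [embedBlock_eq_submatrix_fromBlocks, fromBlocks_one, submatrix_one_equiv]

lemma embedBlock_conjTranspose (M : Matrix (Fin k) (Fin k) ℂ) :
    (embedBlock k hk M)ᴴ = embedBlock k hk Mᴴ := by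
  simp only [embedBlock_eq_submatrix_fromBlocks, conjTranspose_submatrix,
    fromBlocks_conjTranspose, conjTranspose_zero, conjTranspose_one]

lemma embedBlock_mem_unitaryGroup {M : Matrix (Fin k) (Fin k) ℂ}
    (hM : M ∈ unitaryGroup (Fin k) ℂ) : embedBlock k hk M ∈ unitaryGroup (Fin n) ℂ := by
  rw [mem_unitaryGroup_iff', star_eq_conjTranspose, embedBlock_conjTranspose, ← embedBlock_mul,
    ← star_eq_conjTranspose, (mem_unitaryGroup_iff').1 hM, embedBlock_one]

lemma principalSubmatrix_embedBlock_mul_mul_embedBlock (M N : Matrix (Fin k) (Fin k) ℂ)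
    (B : Matrix (Fin n) (Fin n) ℂ) :
    principalSubmatrix k hk (embedBlock k hk M * B * embedBlock k hk N) =
      M * principalSubmatrix k hk B * N := by
  set B' := B.submatrix (blockEquiv hk) (blockEquiv hk)
  have hB : B = B'.submatrix (blockEquiv hk).symm (blockEquiv hk).symm := by simp [B']
  rw [principalSubmatrix_eq_toBlocks₁₁, principalSubmatrix_eq_toBlocks₁₁, hB,
    embedBlock_eq_submatrix_fromBlocks, embedBlock_eq_submatrix_fromBlocks,
    submatrix_mul_equiv, submatrix_mul_equiv, submatrix_submatrix]
  rw [← fromBlocks_toBlocks B', fromBlocks_multiply, fromBlocks_multiply]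
  simp only [Matrix.zero_mul, add_zero, Matrix.mul_zero, Matrix.mul_one, zero_add, Matrix.one_mul,
    Equiv.symm_comp_self, submatrix_id_id, toBlocks_fromBlocks₁₁, submatrix_submatrix]

end BlockEmbedding

lemma embedBlock_embedBlock {n k j : ℕ} (hkj : k ≤ j) (hj : j ≤ n)
    (M : Matrix (Fin k) (Fin k) ℂ) :
    embedBlock j hj (embedBlock k hkj M) = embedBlock k (hkj.trans hj) M := by
  ext p q
  simp only [embedBlock]
  split_ifs <;> simp_all [Fin.ext_iff] <;> omega

lemma charpoly_mul_mul_of_mul_eq_one {ι R : Type*} [Fintype ι] [DecidableEq ι] [CommRing R]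
    {W V : Matrix ι ι R} (h : V * W = 1) (N : Matrix ι ι R) :
    (W * N * V).charpoly = N.charpoly := by
  rw [charpoly_mul_comm, ← mul_assoc, h, one_mul]

section TorusAction

variable {n k : ℕ} (hk : k ≤ n) {U : Matrix (Fin k) (Fin k) ℂ}

lemma diagonal_mem_unitaryGroup {s : Fin k → ℂ} (hs : ∀ i, star (s i) * s i = 1) :
    diagonal s ∈ unitaryGroup (Fin k) ℂ := by
  rw [mem_unitaryGroup_iff', star_eq_conjTranspose, diagonal_conjTranspose, diagonal_mul_diagonal]
  exact diagonal_eq_one.2 (funext hs)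

lemma conjTranspose_mul_diagonal_mul_diagonal (hU : U ∈ unitaryGroup (Fin k) ℂ)
    (s₁ s₂ : Fin k → ℂ) :
    Uᴴ * diagonal (fun i => s₁ i * s₂ i) * U =
      (Uᴴ * diagonal s₁ * U) * (Uᴴ * diagonal s₂ * U) := by
  rw [← diagonal_mul_diagonal]
  simp only [Matrix.mul_assoc]
  rw [← Matrix.mul_assoc U Uᴴ, ← star_eq_conjTranspose, (mem_unitaryGroup_iff).1 hU,
    Matrix.one_mul]

lemma gzAct_mul (hU : U ∈ unitaryGroup (Fin k) ℂ) (s₁ s₂ : Fin k → ℂ)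
    (A : Matrix (Fin n) (Fin n) ℂ) :
    gzAct k hk U (fun i => s₁ i * s₂ i) A = gzAct k hk U s₁ (gzAct k hk U s₂ A) := by
  simp only [gzAct, conjTranspose_mul_diagonal_mul_diagonal hU, embedBlock_mul, conjTranspose_mul,
    Matrix.mul_assoc]

lemma gzAct_one (hU : U ∈ unitaryGroup (Fin k) ℂ) (A : Matrix (Fin n) (Fin n) ℂ) :
    gzAct k hk U (fun _ => 1) A = A := by
  rw [gzAct, diagonal_one, Matrix.mul_one, ← star_eq_conjTranspose, (mem_unitaryGroup_iff').1 hU,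
    embedBlock_one, conjTranspose_one, Matrix.one_mul, Matrix.mul_one]

lemma principalSubmatrix_gzAct {j : ℕ} (hkj : k ≤ j) (hj : j ≤ n) (s : Fin k → ℂ)
    (A : Matrix (Fin n) (Fin n) ℂ) :
    principalSubmatrix j hj (gzAct k hk U s A) =
      embedBlock k hkj (Uᴴ * diagonal s * U) * principalSubmatrix j hj A *
        (embedBlock k hkj (Uᴴ * diagonal s * U))ᴴ := by
  rw [gzAct, ← embedBlock_embedBlock hkj hj, embedBlock_conjTranspose, embedBlock_conjTranspose,
    principalSubmatrix_embedBlock_mul_mul_embedBlock]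

lemma charpoly_principalSubmatrix_gzAct (hU : U ∈ unitaryGroup (Fin k) ℂ) {s : Fin k → ℂ}
    (hs : ∀ i, star (s i) * s i = 1) (A : Matrix (Fin n) (Fin n) ℂ) {j : ℕ} (hkj : k ≤ j)
    (hj : j ≤ n) :
    (principalSubmatrix j hj (gzAct k hk U s A)).charpoly =
      (principalSubmatrix j hj A).charpoly := by
  have hT : Uᴴ * diagonal s * U ∈ unitaryGroup (Fin k) ℂ :=
    mul_mem (mul_mem (Unitary.star_mem hU) (diagonal_mem_unitaryGroup hs)) hU
  rw [principalSubmatrix_gzAct hk hkj hj]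
  exact charpoly_mul_mul_of_mul_eq_one (embedBlock_mem_unitaryGroup hkj hT).1 _

end TorusAction

theorem gz_torus_action_general (n k : ℕ) (hk : k ≤ n)
    (A : Matrix (Fin n) (Fin n) ℂ)
    (U : Matrix (Fin k) (Fin k) ℂ) (hU : U ∈ Matrix.unitaryGroup (Fin k) ℂ)
    (s₁ s₂ : Fin k → ℂ) (hs₁ : ∀ i, star (s₁ i) * s₁ i = 1) :
    gzAct k hk U (fun i => s₁ i * s₂ i) A = gzAct k hk U s₁ (gzAct k hk U s₂ A) ∧
      gzAct k hk U (fun _ => 1) A = A ∧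
      ∀ (j : ℕ) (hkj : k ≤ j) (hj : j ≤ n),
        (principalSubmatrix j hj (gzAct k hk U s₁ A)).charpoly =
          (principalSubmatrix j hj A).charpoly :=
  ⟨gzAct_mul hk hU s₁ s₂ A, gzAct_one hk hU A,
    fun _ hkj hj => charpoly_principalSubmatrix_gzAct hk hU hs₁ A hkj hj⟩

/-- The formula `t • A := Ad_{U⁻¹ t U}(A)` defines a group action of the diagonal torus
`T(k)`: it is multiplicative and unital; moreover it preserves the eigenvalues
(characteristic polynomials) of every principal submatrix `A^{(j)}` for `j ≥ k`. -/
theorem gz_torus_action (n k : ℕ) (hk : k ≤ n)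
    (A : Matrix (Fin n) (Fin n) ℂ) (hA : A.IsHermitian)
    (d : Fin k → ℝ) (hd : StrictMono d)
    (U : Matrix (Fin k) (Fin k) ℂ) (hU : U ∈ Matrix.unitaryGroup (Fin k) ℂ)
    (hdiag : U * principalSubmatrix k hk A * Uᴴ = Matrix.diagonal fun i => (d i : ℂ))
    (s₁ s₂ : Fin k → ℂ) (hs₁ : ∀ i, star (s₁ i) * s₁ i = 1)
    (hs₂ : ∀ i, star (s₂ i) * s₂ i = 1) :
    gzAct k hk U (fun i => s₁ i * s₂ i) A = gzAct k hk U s₁ (gzAct k hk U s₂ A) ∧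
      gzAct k hk U (fun _ => 1) A = A ∧
      ∀ (j : ℕ) (hkj : k ≤ j) (hj : j ≤ n),
        (principalSubmatrix j hj (gzAct k hk U s₁ A)).charpoly =
          (principalSubmatrix j hj A).charpoly :=
  gz_torus_action_general n k hk A U hU s₁ s₂ hs₁
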